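/- Let n ≥ 1, let K, L ⊂ ℝⁿ be non-empty compact sets, let λ > 0 and set μ = dist_H(K, L). Then for every x ∈ ℝⁿ, |M_λ(x; K) − M_λ(x; L)| ≤ μ(1 + λ)( (dist(x; K) + μ)² + 2·dist(x; K) + 2μ + 1 ). -/

import Mathlib

/-- Convex envelope: pointwise sup of affine minorants. -/
noncomputable def convEnv {n : ℕ} (g : EuclideanSpace ℝ (Fin n) → ℝ)
    (x : EuclideanSpace ℝ (Fin n)) : ℝ :=
  sSup {a : ℝ | ∃ ℓ : EuclideanSpace ℝ (Fin n) →ᵃ[ℝ] ℝ, (∀ y, ℓ y ≤ g y) ∧ a = ℓ x}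

/-- Lower compensated convex transform. -/
noncomputable def lowerT {n : ℕ} (lam : ℝ) (f : EuclideanSpace ℝ (Fin n) → ℝ)
    (x : EuclideanSpace ℝ (Fin n)) : ℝ :=
  convEnv (fun y => f y + lam * ‖y‖ ^ 2) x - lam * ‖x‖ ^ 2

/-- Quadratic multiscale medial axis map
`M_λ(x; K) = (1+λ)(dist²(x;K) − C^l_λ(dist²(·;K))(x))`. -/
noncomputable def mmam {n : ℕ} (lam : ℝ) (K : Set (EuclideanSpace ℝ (Fin n)))
    (x : EuclideanSpace ℝ (Fin n)) : ℝ :=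
  (1 + lam) * (Metric.infDist x K ^ 2 - lowerT lam (fun y => Metric.infDist y K ^ 2) x)

/-!
Write `d_K = dist(·; K)`. Hausdorff closeness gives `d_K ≤ d_L + μ`, hence
`d_K² ≤ (1 + μ) d_L² + μ + μ²` since `2 d_L ≤ d_L² + 1`. Rescaling an affine minorant by
`1 + μ` turns this into `C^l_λ(d_K²) ≤ (1 + μ) C^l_{λ/(1+μ)}(d_L²) + μ + μ²`, and since
`C^l_λ` increases with `λ` and lies below the function it transforms, this becomes
`C^l_λ(d_K²)(x) ≤ C^l_λ(d_L²)(x) + μ d_L(x)² + μ + μ²`. Combined with the same estimate with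
`K` and `L` exchanged and with `|d_K² − d_L²| ≤ μ (2 d_K + μ)`, this bounds both signs of
`M_λ(x; K) − M_λ(x; L)`.
-/

open Metric Set Bornology

section CompensatedConvexity

variable {n : ℕ} {f g : EuclideanSpace ℝ (Fin n) → ℝ} {x : EuclideanSpace ℝ (Fin n)}

theorem le_convEnv (ℓ : EuclideanSpace ℝ (Fin n) →ᵃ[ℝ] ℝ) (hℓ : ∀ y, ℓ y ≤ g y) :
    ℓ x ≤ convEnv g x :=
  le_csSup ⟨g x, by rintro _ ⟨ℓ', hℓ', rfl⟩; exact hℓ' x⟩ ⟨ℓ, hℓ, rfl⟩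

theorem convEnv_le_of_forall {b : ℝ}
    (hg : ∃ ℓ : EuclideanSpace ℝ (Fin n) →ᵃ[ℝ] ℝ, ∀ y, ℓ y ≤ g y)
    (hb : ∀ ℓ : EuclideanSpace ℝ (Fin n) →ᵃ[ℝ] ℝ, (∀ y, ℓ y ≤ g y) → ℓ x ≤ b) :
    convEnv g x ≤ b := by
  obtain ⟨ℓ, hℓ⟩ := hg
  exact csSup_le ⟨_, ℓ, hℓ, rfl⟩ (by rintro _ ⟨ℓ', hℓ', rfl⟩; exact hb ℓ' hℓ')

theorem convEnv_le_self (hg : ∃ ℓ : EuclideanSpace ℝ (Fin n) →ᵃ[ℝ] ℝ, ∀ y, ℓ y ≤ g y) :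
    convEnv g x ≤ g x :=
  convEnv_le_of_forall hg fun _ hℓ => hℓ x

theorem convEnv_le_mul_add {a c : ℝ} (ha : 0 < a)
    (hf : ∃ ℓ : EuclideanSpace ℝ (Fin n) →ᵃ[ℝ] ℝ, ∀ y, ℓ y ≤ f y)
    (hfg : ∀ y, f y ≤ a * g y + c) :
    convEnv f x ≤ a * convEnv g x + c := by
  refine convEnv_le_of_forall hf fun ℓ hℓ => ?_
  set ℓ' : EuclideanSpace ℝ (Fin n) →ᵃ[ℝ] ℝ := a⁻¹ • (ℓ - AffineMap.const ℝ _ c)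
  have hℓ' : ∀ y, ℓ' y = (ℓ y - c) / a := fun y => by simp [ℓ', div_eq_inv_mul]
  have hx := le_convEnv (x := x) (g := g) ℓ' fun y => by
    rw [hℓ', div_le_iff₀' ha]; linarith [hℓ y, hfg y]
  rw [hℓ', div_le_iff₀' ha] at hx
  linarith

theorem exists_affineMap_le_add_sq {lam : ℝ} (hf : BddBelow (range f)) (hlam : 0 ≤ lam) :
    ∃ ℓ : EuclideanSpace ℝ (Fin n) →ᵃ[ℝ] ℝ, ∀ y, ℓ y ≤ f y + lam * ‖y‖ ^ 2 := by
  obtain ⟨m, hm⟩ := hf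
  refine ⟨AffineMap.const ℝ _ m, fun y => ?_⟩
  have := hm (mem_range_self y)
  simp only [AffineMap.const_apply]
  nlinarith [sq_nonneg ‖y‖]

theorem lowerT_le_self {lam : ℝ} (hf : BddBelow (range f)) (hlam : 0 ≤ lam) :
    lowerT lam f x ≤ f x := by
  have := convEnv_le_self (x := x) (exists_affineMap_le_add_sq hf hlam)
  rw [lowerT]
  linarith

theorem lowerT_le_lowerT_of_le {lam lam' : ℝ} (hg : BddBelow (range g)) (hlam' : 0 ≤ lam')
    (h : lam' ≤ lam) : lowerT lam' g x ≤ lowerT lam g x := by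
  suffices convEnv (fun y => g y + lam' * ‖y‖ ^ 2) x + (lam - lam') * ‖x‖ ^ 2 ≤
      convEnv (fun y => g y + lam * ‖y‖ ^ 2) x by
    rw [lowerT, lowerT]; linarith
  rw [← le_sub_iff_add_le]
  refine convEnv_le_of_forall (exists_affineMap_le_add_sq hg hlam') fun ℓ hℓ => ?_
  -- `(lam - lam') (2⟪x, ·⟫ - ‖x‖²)` is affine, lies below `(lam - lam') ‖·‖²` and touches it at `x`
  set ℓ' := ℓ + (2 * (lam - lam')) • ((innerSL ℝ x).toLinearMap.toAffineMap)
    - AffineMap.const ℝ _ ((lam - lam') * ‖x‖ ^ 2)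
  have hℓ' : ∀ y, ℓ' y = ℓ y + 2 * (lam - lam') * inner ℝ x y - (lam - lam') * ‖x‖ ^ 2 :=
    fun y => by simp [ℓ']
  have hx := le_convEnv (x := x) (g := fun y => g y + lam * ‖y‖ ^ 2) ℓ' fun y => by
    have htangent : 2 * inner ℝ x y - ‖x‖ ^ 2 ≤ ‖y‖ ^ 2 := by
      nlinarith [real_inner_le_norm x y, sq_nonneg (‖x‖ - ‖y‖)]
    rw [hℓ']
    nlinarith [hℓ y, mul_le_mul_of_nonneg_left htangent (sub_nonneg.2 h)]
  rw [hℓ', real_inner_self_eq_norm_sq] at hx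
  linarith

theorem lowerT_le_mul_add {lam a c : ℝ} (ha : 1 ≤ a) (hlam : 0 ≤ lam)
    (hf : BddBelow (range f)) (hg : BddBelow (range g)) (hfg : ∀ y, f y ≤ a * g y + c) :
    lowerT lam f x ≤ a * lowerT lam g x + c := by
  have ha₀ : 0 < a := zero_lt_one.trans_le ha
  have hscale : a * (lam / a) = lam := mul_div_cancel₀ lam ha₀.ne'
  have henv : convEnv (fun y => f y + lam * ‖y‖ ^ 2) x ≤
      a * convEnv (fun y => g y + lam / a * ‖y‖ ^ 2) x + c :=
    convEnv_le_mul_add ha₀ (exists_affineMap_le_add_sq hf hlam) fun y => by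
      rw [mul_add, ← mul_assoc, hscale]; linarith [hfg y]
  have hmono := mul_le_mul_of_nonneg_left
    (lowerT_le_lowerT_of_le (x := x) hg (by positivity) (div_le_self hlam ha)) ha₀.le
  simp only [lowerT, mul_sub, ← mul_assoc, hscale] at hmono ⊢
  linarith

theorem lowerT_sq_le_add {u v : EuclideanSpace ℝ (Fin n) → ℝ} {lam μ : ℝ}
    (hu : ∀ y, 0 ≤ u y) (hv : ∀ y, 0 ≤ v y) (hμ : 0 ≤ μ) (hlam : 0 ≤ lam)
    (huv : ∀ y, u y ≤ v y + μ) :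
    lowerT lam (fun y => u y ^ 2) x ≤
      lowerT lam (fun y => v y ^ 2) x + μ * v x ^ 2 + μ + μ ^ 2 := by
  have hsq_bdd : ∀ w : EuclideanSpace ℝ (Fin n) → ℝ, BddBelow (range fun y => w y ^ 2) :=
    fun w => ⟨0, by rintro _ ⟨y, rfl⟩; positivity⟩
  have hsq : ∀ y, u y ^ 2 ≤ (1 + μ) * v y ^ 2 + (μ + μ ^ 2) := fun y => by
    nlinarith [hu y, hv y, huv y, sq_nonneg (v y - 1)]
  have hcomp := lowerT_le_mul_add (x := x) (le_add_of_nonneg_right hμ) hlam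
    (hsq_bdd u) (hsq_bdd v) hsq
  have hself := lowerT_le_self (x := x) (hsq_bdd v) hlam
  linarith [mul_le_mul_of_nonneg_left hself hμ]

end CompensatedConvexity

theorem infDist_le_infDist_add_hausdorffDist_of_isBounded {X : Type*} [PseudoMetricSpace X]
    {s t : Set X} (hs : s.Nonempty) (ht : t.Nonempty) (hsb : IsBounded s) (htb : IsBounded t)
    (x : X) : infDist x s ≤ infDist x t + hausdorffDist s t :=
  hausdorffDist_comm (s := s) ▸ infDist_le_infDist_add_hausdorffDist
    (hausdorffEDist_ne_top_of_nonempty_of_bounded ht hs htb hsb)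

theorem mmam_hausdorff_stability_general (n : ℕ)
    (K L : Set (EuclideanSpace ℝ (Fin n))) (hK : K.Nonempty) (hL : L.Nonempty)
    (hKc : IsCompact K) (hLc : IsCompact L)
    (lam : ℝ) (hlam : 0 < lam) (μ : ℝ) (hμ : μ = Metric.hausdorffDist K L)
    (x : EuclideanSpace ℝ (Fin n)) :
    |mmam lam K x - mmam lam L x| ≤
      μ * (1 + lam) * ((Metric.infDist x K + μ) ^ 2 + 2 * Metric.infDist x K + 2 * μ + 1) := by
  have hμ₀ : 0 ≤ μ := hμ ▸ hausdorffDist_nonneg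
  have hKL : ∀ y, infDist y K ≤ infDist y L + μ := fun y => hμ ▸
    infDist_le_infDist_add_hausdorffDist_of_isBounded hK hL hKc.isBounded hLc.isBounded y
  have hLK : ∀ y, infDist y L ≤ infDist y K + μ := fun y => hμ ▸ hausdorffDist_comm (s := L) ▸
    infDist_le_infDist_add_hausdorffDist_of_isBounded hL hK hLc.isBounded hKc.isBounded y
  have hCK := lowerT_sq_le_add (x := x) (fun _ => infDist_nonneg) (fun _ => infDist_nonneg)
    hμ₀ hlam.le hKL
  have hCL := lowerT_sq_le_add (x := x) (fun _ => infDist_nonneg) (fun _ => infDist_nonneg)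
    hμ₀ hlam.le hLK
  have hdK : 0 ≤ infDist x K := infDist_nonneg
  have hdL : 0 ≤ infDist x L := infDist_nonneg
  rw [mmam, mmam, ← mul_sub, abs_mul, abs_of_pos (by linarith), mul_comm μ, mul_assoc]
  gcongr
  rw [abs_sub_le_iff]
  constructor <;> nlinarith [hKL x, hLK x, mul_nonneg hμ₀ hdK, mul_nonneg hμ₀ hdL]

/-- Hausdorff stability of the multiscale medial axis map. -/
theorem mmam_hausdorff_stability (n : ℕ) (hn : 1 ≤ n)
    (K L : Set (EuclideanSpace ℝ (Fin n))) (hK : K.Nonempty) (hL : L.Nonempty)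
    (hKc : IsCompact K) (hLc : IsCompact L)
    (lam : ℝ) (hlam : 0 < lam) (μ : ℝ) (hμ : μ = Metric.hausdorffDist K L)
    (x : EuclideanSpace ℝ (Fin n)) :
    |mmam lam K x - mmam lam L x| ≤
      μ * (1 + lam) * ((Metric.infDist x K + μ) ^ 2 + 2 * Metric.infDist x K + 2 * μ + 1) :=
  mmam_hausdorff_stability_general n K L hK hL hKc hLc lam hlam μ hμ x
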